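/- For a probability vector (α_1, …, α_{k+1}) and probability distributions P_1, …, P_{k+1} on a finite alphabet X, the generalized Rényi divergence D_{ᾱ}(P_1, …, P_{k+1}) := −log ∑_{x ∈ X} ∏_{i=1}^{k+1} P_i(x)^{α_i} satisfies D_{ᾱ}(P_1, …, P_{k+1}) = min over probability distributions Q on X of ∑_{j=1}^{k+1} α_j · D(Q‖P_j), as extended reals. -/

import Mathlib

open scoped Classical BigOperators

noncomputable def shannonEntropy {X : Type*} [Fintype X] (Q : X → ℝ) : ℝ :=
  -∑ x, Q x * Real.log (Q x)

noncomputable def klDiv {X : Type*} [Fintype X] (Q P : X → ℝ) : EReal :=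
  if ∀ x, 0 < Q x → 0 < P x then
    ((∑ x, Q x * Real.log (Q x / P x) : ℝ) : EReal)
  else ⊤

noncomputable def renyiEntropy {X : Type*} [Fintype X] (α : ℝ) (P : X → ℝ) : ℝ :=
  (1 / (1 - α)) * Real.log (∑ x, P x ^ α)

noncomputable def renyiDiv {X : Type*} [Fintype X] (α : ℝ) (P1 P2 : X → ℝ) : EReal :=
  if 1 < α ∧ ¬ (∀ x, 0 < P1 x → 0 < P2 x) then ⊤
  else if ∀ x, ¬ (0 < P1 x ∧ 0 < P2 x) then ⊤
  else ((1 / (α - 1)) *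
      Real.log (∑ x, if 0 < P1 x ∧ 0 < P2 x then P1 x ^ α * P2 x ^ (1 - α) else 0) : ℝ)

def IsPMF {X : Type*} [Fintype X] (P : X → ℝ) : Prop :=
  (∀ x, 0 ≤ P x) ∧ ∑ x, P x = 1

/-- The generalized Rényi divergence `D_ᾱ(P_1,…,P_{k+1}) = -log ∑_x ∏_i P_i(x)^{α_i}`,
with the conventions `0^0 = 1`, `a^0 = 1`, and `-log 0 = +∞`. -/
noncomputable def genRenyiDiv {X : Type*} [Fintype X] {k : ℕ}
    (α : Fin (k + 1) → ℝ) (P : Fin (k + 1) → X → ℝ) : EReal :=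
  if (∑ x, ∏ i, P i x ^ α i) = 0 then ⊤
  else ((-Real.log (∑ x, ∏ i, P i x ^ α i) : ℝ) : EReal)

/-!
With `S x = ∏ i, P i x ^ α i` and `Z = ∑ x, S x`: whenever every `D(Q‖P_j)` with `α_j > 0` is
finite, `∑ α_j = 1` turns `∑ α_j D(Q‖P_j)` into `∑ Q log (Q / S) = D(Q ‖ S / Z) - log Z`, which by
Gibbs' inequality is at least `-log Z`, with equality at `Q = S / Z`. Otherwise the weighted sum is
`⊤`; when `Z = 0` this happens for every `Q`, matching `genRenyiDiv = ⊤`.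
-/

open Finset Real

namespace EReal

@[norm_cast]
lemma coe_finset_sum {ι : Type*} (s : Finset ι) (f : ι → ℝ) :
    ((∑ i ∈ s, f i : ℝ) : EReal) = ∑ i ∈ s, (f i : EReal) :=
  map_sum (⟨⟨Real.toEReal, coe_zero⟩, coe_add⟩ : ℝ →+ EReal) f s

lemma finset_sum_ne_bot {ι : Type*} {s : Finset ι} {f : ι → EReal} (h : ∀ i ∈ s, f i ≠ ⊥) :
    ∑ i ∈ s, f i ≠ ⊥ := by
  induction s using Finset.induction_on with
  | empty => simp
  | insert a t ha ih =>
    rw [sum_insert ha, Ne, add_eq_bot_iff, not_or]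
    exact ⟨h a (mem_insert_self a t), ih fun i hi => h i (mem_insert_of_mem hi)⟩

lemma finset_sum_eq_top {ι : Type*} {s : Finset ι} {f : ι → EReal} (h : ∀ i ∈ s, f i ≠ ⊥)
    {i : ι} (hi : i ∈ s) (hfi : f i = ⊤) : ∑ j ∈ s, f j = ⊤ := by
  rw [← add_sum_erase s f hi, hfi]
  exact top_add_of_ne_bot (finset_sum_ne_bot fun j hj => h j (mem_of_mem_erase hj))

lemma coe_mul_ne_bot {a : ℝ} (ha : 0 ≤ a) {y : EReal} (hy : y ≠ ⊥) : (a : EReal) * y ≠ ⊥ :=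
  (mul_ne_bot _ _).2 ⟨Or.inl (coe_ne_bot a), Or.inr hy, Or.inl (coe_ne_top a),
    Or.inl (EReal.coe_nonneg.2 ha)⟩

end EReal

lemma prod_rpow_pos_iff {ι : Type*} [Fintype ι] {p a : ι → ℝ} (hp : ∀ i, 0 ≤ p i)
    (ha : ∀ i, 0 ≤ a i) : 0 < ∏ i, p i ^ a i ↔ ∀ i, 0 < a i → 0 < p i := by
  rw [(prod_nonneg fun i _ => rpow_nonneg (hp i) _).lt_iff_ne', Ne, prod_eq_zero_iff]
  simp only [mem_univ, true_and, not_exists, rpow_eq_zero_iff_of_nonneg (hp _)]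
  refine forall_congr' fun i => ?_
  rw [(hp i).lt_iff_ne', (ha i).lt_iff_ne']
  tauto

section

variable {X ι : Type*} [Fintype X] [Fintype ι]

lemma IsPMF.exists_pos {Q : X → ℝ} (hQ : IsPMF Q) : ∃ x, 0 < Q x := by
  by_contra! h
  have : ∑ x, Q x = 0 := sum_eq_zero fun x _ => le_antisymm (h x) (hQ.1 x)
  simp [hQ.2] at this

lemma isPMF_div_sum {S : X → ℝ} (hS : ∀ x, 0 ≤ S x) (hZ : 0 < ∑ x, S x) :
    IsPMF fun x => S x / ∑ y, S y :=
  ⟨fun x => div_nonneg (hS x) hZ.le, by rw [← sum_div, div_self hZ.ne']⟩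

lemma neg_log_sum_le_sum_mul_log_div {Q S : X → ℝ} (hQ : IsPMF Q) (hS : ∀ x, 0 ≤ S x)
    (hsupp : ∀ x, 0 < Q x → 0 < S x) : -log (∑ x, S x) ≤ ∑ x, Q x * log (Q x / S x) := by
  obtain ⟨x₀, hx₀⟩ := hQ.exists_pos
  set Z := ∑ x, S x
  have hZ : 0 < Z := (hsupp x₀ hx₀).trans_le (single_le_sum (fun x _ => hS x) (mem_univ x₀))
  -- `log y ≤ y - 1` at `y = S x / (Q x * Z)`
  have hterm : ∀ x, Q x * -log Z + (Q x - S x / Z) ≤ Q x * log (Q x / S x) := by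
    intro x
    rcases (hQ.1 x).eq_or_lt with hq | hq
    · rw [← hq]
      simpa using div_nonneg (hS x) hZ.le
    have hs := hsupp x hq
    have hlog := mul_le_mul_of_nonneg_left
      (log_le_sub_one_of_pos (div_pos hs (mul_pos hq hZ))) hq.le
    rw [log_div hs.ne' (mul_pos hq hZ).ne', log_mul hq.ne' hZ.ne'] at hlog
    rw [log_div hq.ne' hs.ne']
    have hcancel : Q x * (S x / (Q x * Z)) = S x / Z := by field_simp
    nlinarith
  calc -log Z = ∑ x, (Q x * -log Z + (Q x - S x / Z)) := by
        rw [sum_add_distrib, ← sum_mul, sum_sub_distrib, ← sum_div, hQ.2, div_self hZ.ne']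
        ring
    _ ≤ ∑ x, Q x * log (Q x / S x) := sum_le_sum fun x _ => hterm x

lemma sum_div_sum_mul_log_div_div_sum {S : X → ℝ} (hZ : ∑ x, S x ≠ 0) :
    ∑ x, S x / (∑ y, S y) * log (S x / (∑ y, S y) / S x) = -log (∑ x, S x) := by
  set Z := ∑ x, S x
  have hterm : ∀ x, S x / Z * log (S x / Z / S x) = S x / Z * log Z⁻¹ := by
    intro x
    rcases eq_or_ne (S x) 0 with hs | hs
    · simp [hs]
    · rw [div_div_cancel_left' hs]
  rw [sum_congr rfl fun x _ => hterm x, ← sum_mul, ← sum_div, div_self hZ, one_mul, log_inv]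

lemma klDiv_of_forall_pos {Q P : X → ℝ} (h : ∀ x, 0 < Q x → 0 < P x) :
    klDiv Q P = ((∑ x, Q x * log (Q x / P x) : ℝ) : EReal) :=
  if_pos h

lemma klDiv_eq_top {Q P : X → ℝ} {x : X} (hQ : 0 < Q x) (hP : P x ≤ 0) : klDiv Q P = ⊤ :=
  if_neg fun h => (h x hQ).not_ge hP

lemma klDiv_ne_bot (Q P : X → ℝ) : klDiv Q P ≠ ⊥ := by
  unfold klDiv
  split <;> simp

variable {α : ι → ℝ} {P : ι → X → ℝ} {Q : X → ℝ}

lemma sum_mul_klDiv_eq_top (hα0 : ∀ i, 0 ≤ α i) {j : ι} (hαj : 0 < α j)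
    (hj : klDiv Q (P j) = ⊤) : ∑ i, (α i : EReal) * klDiv Q (P i) = ⊤ :=
  EReal.finset_sum_eq_top (fun i _ => EReal.coe_mul_ne_bot (hα0 i) (klDiv_ne_bot _ _))
    (mem_univ j) (by rw [hj, EReal.coe_mul_top_of_pos hαj])

lemma sum_mul_klDiv_eq_coe (hα0 : ∀ i, 0 ≤ α i)
    (hsupp : ∀ i, 0 < α i → ∀ x, 0 < Q x → 0 < P i x) :
    ∑ i, (α i : EReal) * klDiv Q (P i) =
      ((∑ i, α i * ∑ x, Q x * log (Q x / P i x) : ℝ) : EReal) := by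
  rw [EReal.coe_finset_sum]
  refine sum_congr rfl fun i _ => ?_
  rcases (hα0 i).eq_or_lt with h0 | hi
  · simp [← h0]
  · rw [klDiv_of_forall_pos (hsupp i hi), ← EReal.coe_mul]

lemma sum_mul_sum_mul_log_div_eq (hα0 : ∀ i, 0 ≤ α i) (hα1 : ∑ i, α i = 1)
    (hP : ∀ i x, 0 ≤ P i x) (hQ : ∀ x, 0 ≤ Q x)
    (hsupp : ∀ i, 0 < α i → ∀ x, 0 < Q x → 0 < P i x) :
    ∑ i, α i * ∑ x, Q x * log (Q x / P i x) = ∑ x, Q x * log (Q x / ∏ i, P i x ^ α i) := by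
  simp_rw [mul_sum]
  rw [sum_comm]
  refine sum_congr rfl fun x _ => ?_
  rcases (hQ x).eq_or_lt with hq | hq
  · simp [← hq]
  have hpos : ∀ i, 0 < α i → 0 < P i x := fun i hi => hsupp i hi x hq
  have hprod : 0 < ∏ i, P i x ^ α i := (prod_rpow_pos_iff (hP · x) hα0).2 hpos
  have hterm : ∀ i, α i * log (Q x / P i x) = α i * log (Q x) - log (P i x ^ α i) := by
    intro i
    rcases (hα0 i).eq_or_lt with h0 | hi
    · simp [← h0]
    · rw [log_div hq.ne' (hpos i hi).ne', log_rpow (hpos i hi)]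
      ring
  calc ∑ i, α i * (Q x * log (Q x / P i x))
      = Q x * ∑ i, α i * log (Q x / P i x) := by
        rw [mul_sum]
        exact sum_congr rfl fun i _ => by ring
    _ = Q x * (log (Q x) * ∑ i, α i - log (∏ i, P i x ^ α i)) := by
        simp_rw [hterm]
        rw [sum_sub_distrib, ← sum_mul, log_prod (fun i _ => (prod_ne_zero_iff.1 hprod.ne') i
          (mem_univ i))]
        ring
    _ = Q x * log (Q x / ∏ i, P i x ^ α i) := by
        rw [hα1, mul_one, log_div hq.ne' hprod.ne']

end

section

variable {X : Type*} [Fintype X] {k : ℕ} {α : Fin (k + 1) → ℝ} {P : Fin (k + 1) → X → ℝ}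

lemma genRenyiDiv_eq_coe (h : ∑ x, ∏ i, P i x ^ α i ≠ 0) :
    genRenyiDiv α P = ((-log (∑ x, ∏ i, P i x ^ α i) : ℝ) : EReal) :=
  if_neg h

lemma genRenyiDiv_le_sum_mul_klDiv {Q : X → ℝ} (hα0 : ∀ i, 0 ≤ α i) (hα1 : ∑ i, α i = 1)
    (hP : ∀ i x, 0 ≤ P i x) (hQ : IsPMF Q) :
    genRenyiDiv α P ≤ ∑ i, (α i : EReal) * klDiv Q (P i) := by
  by_cases hsupp : ∀ i, 0 < α i → ∀ x, 0 < Q x → 0 < P i x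
  swap
  · push Not at hsupp
    obtain ⟨j, hαj, x, hqx, hpx⟩ := hsupp
    rw [sum_mul_klDiv_eq_top hα0 hαj (klDiv_eq_top hqx hpx)]
    exact le_top
  have hS : ∀ x, 0 ≤ ∏ i, P i x ^ α i := fun x => prod_nonneg fun i _ => rpow_nonneg (hP i x) _
  have hSsupp : ∀ x, 0 < Q x → 0 < ∏ i, P i x ^ α i := fun x hx =>
    (prod_rpow_pos_iff (hP · x) hα0).2 fun i hi => hsupp i hi x hx
  obtain ⟨x₀, hx₀⟩ := hQ.exists_pos
  have hZ : ∑ x, ∏ i, P i x ^ α i ≠ 0 :=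
    ((hSsupp x₀ hx₀).trans_le (single_le_sum (fun x _ => hS x) (mem_univ x₀))).ne'
  rw [genRenyiDiv_eq_coe hZ, sum_mul_klDiv_eq_coe hα0 hsupp,
    sum_mul_sum_mul_log_div_eq hα0 hα1 hP hQ.1 hsupp, EReal.coe_le_coe_iff]
  exact neg_log_sum_le_sum_mul_log_div hQ hS hSsupp

lemma exists_isPMF_sum_mul_klDiv_eq_genRenyiDiv (hα0 : ∀ i, 0 ≤ α i) (hα1 : ∑ i, α i = 1)
    (hP : ∀ i x, 0 ≤ P i x) (hZ : 0 < ∑ x, ∏ i, P i x ^ α i) :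
    ∃ Q, IsPMF Q ∧ ∑ i, (α i : EReal) * klDiv Q (P i) = genRenyiDiv α P := by
  have hS : ∀ x, 0 ≤ ∏ i, P i x ^ α i := fun x => prod_nonneg fun i _ => rpow_nonneg (hP i x) _
  have hQ := isPMF_div_sum hS hZ
  have hsupp : ∀ i, 0 < α i → ∀ x, 0 < (∏ j, P j x ^ α j) / (∑ y, ∏ j, P j y ^ α j) →
      0 < P i x := fun i hi x hx =>
    (prod_rpow_pos_iff (hP · x) hα0).1 ((div_pos_iff_of_pos_right hZ).1 hx) i hi
  refine ⟨_, hQ, ?_⟩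
  rw [genRenyiDiv_eq_coe hZ.ne', sum_mul_klDiv_eq_coe hα0 hsupp,
    sum_mul_sum_mul_log_div_eq hα0 hα1 hP hQ.1 hsupp, sum_div_sum_mul_log_div_div_sum hZ.ne']

end

theorem gen_renyi_div_char {X : Type*} [Fintype X] {k : ℕ}
    (α : Fin (k + 1) → ℝ) (hα0 : ∀ i, 0 ≤ α i) (hα1 : ∑ i, α i = 1)
    (P : Fin (k + 1) → X → ℝ) (hP : ∀ i, IsPMF (P i)) :
    IsLeast {v : EReal | ∃ Q : X → ℝ, IsPMF Q ∧
        v = ∑ j, ((α j : ℝ) : EReal) * klDiv Q (P j)}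
      (genRenyiDiv α P) := by
  have hP0 : ∀ i x, 0 ≤ P i x := fun i => (hP i).1
  have hlower : ∀ Q, IsPMF Q → genRenyiDiv α P ≤ ∑ j, (α j : EReal) * klDiv Q (P j) :=
    fun Q hQ => genRenyiDiv_le_sum_mul_klDiv hα0 hα1 hP0 hQ
  suffices ∃ Q, IsPMF Q ∧ ∑ j, (α j : EReal) * klDiv Q (P j) ≤ genRenyiDiv α P by
    obtain ⟨Q, hQ, hle⟩ := this
    exact ⟨⟨Q, hQ, le_antisymm (hlower Q hQ) hle⟩, fun v ⟨Q, hQ, hv⟩ => hv ▸ hlower Q hQ⟩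
  have hZ : 0 ≤ ∑ x, ∏ i, P i x ^ α i :=
    sum_nonneg fun x _ => prod_nonneg fun i _ => rpow_nonneg (hP0 i x) _
  rcases hZ.eq_or_lt with hZ | hZ
  · exact ⟨P 0, hP 0, by rw [genRenyiDiv, if_pos hZ.symm]; exact le_top⟩
  · obtain ⟨Q, hQ, hQ_eq⟩ := exists_isPMF_sum_mul_klDiv_eq_genRenyiDiv hα0 hα1 hP0 hZ
    exact ⟨Q, hQ, hQ_eq.le⟩
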